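/- arXiv:2007.06564 — 3 statements merged into one kernel-verified Lean document; each statement's English description precedes it below -/
import Mathlib

section
/- For every density matrix ρ and all α, β ∈ ZMod d, the displaced matrix D(α,β)ᴴ ρ D(α,β) is a density matrix and satisfies G_X(D(α,β)ᴴ ρ D(α,β)) = G_X(ρ) and G_P(D(α,β)ᴴ ρ D(α,β)) = G_P(ρ); in particular G_XP(D(α,β)ᴴ ρ D(α,β)) = G_XP(ρ). -/
open Matrix
open scoped ComplexOrder

noncomputable section

/-- The Lorenz values of `p : Fin d → ℝ`, computed with the sorting permutation `Tuple.sort p`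
(they are independent of the choice of sorting permutation):
`L(p, ℓ) = ∑_{k=0}^{ℓ} p (π k)` where `π` arranges the values of `p` in ascending order. -/
def lorenzF {d : ℕ} (p : Fin d → ℝ) (ℓ : Fin d) : ℝ :=
  ∑ k ∈ Finset.Iic ℓ, p (Tuple.sort p k)

/-- The Gini index of `p : Fin d → ℝ`: `G(p) = 1 − (2/(d+1)) · ∑_{ℓ=0}^{d−1} L(p, ℓ)`. -/
def giniF {d : ℕ} (p : Fin d → ℝ) : ℝ :=
  1 - (2 / ((d : ℝ) + 1)) * ∑ ℓ : Fin d, lorenzF p ℓ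

/-- The Gini index of a function `p : ZMod d → ℝ`, obtained by reindexing along the
bijection `Fin d → ZMod d`, `k ↦ (k : ZMod d)`. -/
def gini {d : ℕ} [NeZero d] (p : ZMod d → ℝ) : ℝ :=
  giniF (fun k : Fin d => p ((k : ℕ) : ZMod d))

/-- A density matrix: positive semidefinite with trace 1. -/
def IsDensityMatrix {d : ℕ} [NeZero d] (ρ : Matrix (ZMod d) (ZMod d) ℂ) : Prop :=
  ρ.PosSemidef ∧ ρ.trace = 1

/-- The position distribution of `ρ`: `P_X(ρ) r = Re(ρ r r)`. -/
def PX {d : ℕ} [NeZero d] (ρ : Matrix (ZMod d) (ZMod d) ℂ) : ZMod d → ℝ :=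
  fun r => (ρ r r).re

/-- `ω = exp(2πi/d)`. -/
def omega (d : ℕ) : ℂ := Complex.exp (2 * Real.pi * Complex.I / d)

/-- The Fourier matrix `F r s = ω^{(r·s).val} / √d`. -/
def Fmat (d : ℕ) [NeZero d] : Matrix (ZMod d) (ZMod d) ℂ :=
  Matrix.of fun r s : ZMod d => omega d ^ (r * s).val / (Real.sqrt d : ℂ)

/-- The momentum distribution of `ρ`: `P_P(ρ) r = Re((Fᴴ ρ F) r r)`. -/
def PP {d : ℕ} [NeZero d] (ρ : Matrix (ZMod d) (ZMod d) ℂ) : ZMod d → ℝ :=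
  fun r => (((Fmat d)ᴴ * ρ * Fmat d) r r).re

/-- `G_X(ρ) = G(P_X(ρ))`. -/
def GX {d : ℕ} [NeZero d] (ρ : Matrix (ZMod d) (ZMod d) ℂ) : ℝ := gini (PX ρ)

/-- `G_P(ρ) = G(P_P(ρ))`. -/
def GP {d : ℕ} [NeZero d] (ρ : Matrix (ZMod d) (ZMod d) ℂ) : ℝ := gini (PP ρ)

/-- `G_XP(ρ) = G_X(ρ) + G_P(ρ)`. -/
def GXP {d : ℕ} [NeZero d] (ρ : Matrix (ZMod d) (ZMod d) ℂ) : ℝ := GX ρ + GP ρ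


/-- `Z(α) m n = ω^{(α·m).val}` if `m = n`, else `0`. -/
def Zmat (d : ℕ) [NeZero d] (α : ZMod d) : Matrix (ZMod d) (ZMod d) ℂ :=
  Matrix.of fun m n : ZMod d => if m = n then omega d ^ (α * m).val else 0

/-- `X(β) m n = 1` if `m = n + β`, else `0`. -/
def Xmat (d : ℕ) [NeZero d] (β : ZMod d) : Matrix (ZMod d) (ZMod d) ℂ :=
  Matrix.of fun m n : ZMod d => if m = n + β then 1 else 0

/-- The displacement operator `D(α,β) = ω^{((−2⁻¹)·α·β).val} · Z(α) · X(β)`,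
where `2⁻¹` is the inverse of `2` in `ZMod d`. -/
def Dmat (d : ℕ) [NeZero d] (α β : ZMod d) : Matrix (ZMod d) (ZMod d) ℂ :=
  omega d ^ ((-(2 : ZMod d)⁻¹ * α * β).val) • (Zmat d α * Xmat d β)

end

/-! Both `Dmat d α β` and its Fourier conjugate are matrices `shiftPhase a u`: a translation of
`ZMod d` twisted by unimodular phases `u` (for the Fourier side this is the Weyl relation
`D(α,β) F = F N`, with `N` the twisted translation by `α`). Conjugating `ρ` by such a matrix
translates its diagonal, and the Gini index only depends on the sorted values of a
distribution. -/

theorem lorenzF_comp_perm {n : ℕ} (p : Fin n → ℝ) (e : Equiv.Perm (Fin n)) :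
    lorenzF (p ∘ e) = lorenzF p := by
  have hsort : p ∘ (e * Tuple.sort (p ∘ e)) = p ∘ Tuple.sort p :=
    Tuple.comp_sort_eq_comp_iff_monotone.mpr (Tuple.monotone_sort (p ∘ e))
  funext ℓ
  exact Finset.sum_congr rfl fun k _ => congrFun hsort k

theorem giniF_comp_perm {n : ℕ} (p : Fin n → ℝ) (e : Equiv.Perm (Fin n)) :
    giniF (p ∘ e) = giniF p := by
  rw [giniF, giniF, lorenzF_comp_perm]

def finEquivZMod (d : ℕ) [NeZero d] : Fin d ≃ ZMod d where
  toFun k := ((k : ℕ) : ZMod d)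
  invFun z := ⟨z.val, z.val_lt⟩
  left_inv k := Fin.ext (ZMod.val_cast_of_lt k.isLt)
  right_inv z := ZMod.natCast_rightInverse z

theorem gini_comp_perm {d : ℕ} [NeZero d] (p : ZMod d → ℝ) (σ : Equiv.Perm (ZMod d)) :
    gini (p ∘ σ) = gini p := by
  let e := finEquivZMod d
  calc gini (p ∘ σ) = giniF ((p ∘ e) ∘ e.trans (σ.trans e.symm)) := by
        simp only [Equiv.coe_trans, Function.comp_def, Equiv.apply_symm_apply]
        rfl
    _ = gini p := giniF_comp_perm _ _

theorem gini_comp_add_right {d : ℕ} [NeZero d] (p : ZMod d → ℝ) (a : ZMod d) :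
    gini (fun r => p (r + a)) = gini p :=
  gini_comp_perm p (Equiv.addRight a)

section ShiftPhase

variable {G R : Type*} [AddGroup G] [Fintype G] [DecidableEq G] [CommSemiring R]

def shiftPhase (a : G) (u : G → R) : Matrix G G R :=
  of fun m n => if m = n + a then u n else 0

theorem shiftPhase_mul_apply (a : G) (u : G → R) (B : Matrix G G R) (m r : G) :
    (shiftPhase a u * B) m r = u (m - a) * B (m - a) r := by
  rw [mul_apply, Finset.sum_eq_single (m - a)]
  · simp [shiftPhase]
  · intro s _ hs
    have : m ≠ s + a := fun h => hs (eq_sub_of_add_eq h.symm)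
    simp [shiftPhase, this]
  · simp

theorem mul_shiftPhase_apply (a : G) (u : G → R) (B : Matrix G G R) (m r : G) :
    (B * shiftPhase a u) m r = B m (r + a) * u r := by
  rw [mul_apply, Finset.sum_eq_single (r + a)]
  · simp [shiftPhase]
  · intro s _ hs
    simp [shiftPhase, hs]
  · simp

variable [StarRing R]

theorem conjTranspose_shiftPhase_mul_apply (a : G) (u : G → R) (B : Matrix G G R) (m r : G) :
    ((shiftPhase a u)ᴴ * B) m r = star (u m) * B (m + a) r := by
  rw [mul_apply, Finset.sum_eq_single (m + a)]
  · simp [shiftPhase]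
  · intro s _ hs
    simp [shiftPhase, hs]
  · simp

theorem conjTranspose_shiftPhase_mul_mul_apply_self {u : G → R}
    (hu : ∀ n, star (u n) * u n = 1) (a : G) (A : Matrix G G R) (r : G) :
    ((shiftPhase a u)ᴴ * A * shiftPhase a u) r r = A (r + a) (r + a) := by
  rw [mul_shiftPhase_apply, conjTranspose_shiftPhase_mul_apply, mul_right_comm, hu, one_mul]

theorem conjTranspose_shiftPhase_mul_self {u : G → R}
    (hu : ∀ n, star (u n) * u n = 1) (a : G) :
    (shiftPhase a u)ᴴ * shiftPhase a u = 1 := by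
  ext m n
  rw [conjTranspose_shiftPhase_mul_apply, shiftPhase, of_apply, one_apply]
  by_cases h : m = n
  · simp [h, hu]
  · simp [h]

end ShiftPhase

section Displacement

variable {d : ℕ} [NeZero d]

theorem omega_pow_val (x : ZMod d) : omega d ^ x.val = ZMod.stdAddChar x := by
  rw [ZMod.stdAddChar_apply, ZMod.toCircle_apply, omega, ← Complex.exp_nat_mul]
  congr 1
  ring

theorem star_stdAddChar_mul_self (x : ZMod d) :
    star (ZMod.stdAddChar x) * ZMod.stdAddChar x = 1 := by
  rw [ZMod.stdAddChar_apply, RCLike.star_def, Complex.conj_mul', Circle.norm_coe]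
  norm_num

theorem Dmat_eq_shiftPhase (α β : ZMod d) :
    Dmat d α β = shiftPhase β (fun n => ZMod.stdAddChar (-2⁻¹ * α * β + α * (n + β))) := by
  have hZ : Zmat d α = diagonal fun m => ZMod.stdAddChar (α * m) := by
    ext m n
    simp [Zmat, diagonal_apply, omega_pow_val]
  ext m n
  rw [Dmat, hZ, Matrix.smul_apply, diagonal_mul, shiftPhase, of_apply, Xmat, of_apply]
  split_ifs with h
  · simp [h, omega_pow_val, AddChar.map_add_eq_mul]
  · simp

theorem Dmat_conjTranspose_mul_self (α β : ZMod d) : (Dmat d α β)ᴴ * Dmat d α β = 1 := by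
  rw [Dmat_eq_shiftPhase]
  exact conjTranspose_shiftPhase_mul_self (fun _ => star_stdAddChar_mul_self _) β

theorem Dmat_mul_Fmat (α β : ZMod d) :
    Dmat d α β * Fmat d =
      Fmat d * shiftPhase α (fun n => ZMod.stdAddChar (-2⁻¹ * α * β - β * n)) := by
  have hF : ∀ r s, Fmat d r s = ZMod.stdAddChar (r * s) / (Real.sqrt d : ℂ) := fun r s => by
    rw [Fmat, of_apply, omega_pow_val]
  ext m r
  rw [Dmat_eq_shiftPhase, shiftPhase_mul_apply, mul_shiftPhase_apply, hF, hF, mul_div_assoc',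
    div_mul_eq_mul_div, ← AddChar.map_add_eq_mul, ← AddChar.map_add_eq_mul]
  congr 2
  ring

theorem IsDensityMatrix.conjTranspose_mul_mul {ρ U : Matrix (ZMod d) (ZMod d) ℂ}
    (hρ : IsDensityMatrix ρ) (hU : Uᴴ * U = 1) : IsDensityMatrix (Uᴴ * ρ * U) :=
  ⟨hρ.1.conjTranspose_mul_mul_same U,
    by rw [trace_mul_cycle, mul_eq_one_comm.mp hU, Matrix.one_mul, hρ.2]⟩

theorem PX_conjTranspose_shiftPhase_mul_mul {u : ZMod d → ℂ}
    (hu : ∀ n, star (u n) * u n = 1) (a : ZMod d) (ρ : Matrix (ZMod d) (ZMod d) ℂ) :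
    PX ((shiftPhase a u)ᴴ * ρ * shiftPhase a u) = fun r => PX ρ (r + a) :=
  funext fun r => by rw [PX, PX, conjTranspose_shiftPhase_mul_mul_apply_self hu]

theorem PP_eq_PX (ρ : Matrix (ZMod d) (ZMod d) ℂ) : PP ρ = PX ((Fmat d)ᴴ * ρ * Fmat d) := rfl

theorem GX_conjTranspose_Dmat_mul_mul (α β : ZMod d) (ρ : Matrix (ZMod d) (ZMod d) ℂ) :
    GX ((Dmat d α β)ᴴ * ρ * Dmat d α β) = GX ρ := by
  rw [GX, GX, Dmat_eq_shiftPhase,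
    PX_conjTranspose_shiftPhase_mul_mul (fun _ => star_stdAddChar_mul_self _), gini_comp_add_right]

theorem GP_conjTranspose_Dmat_mul_mul (α β : ZMod d) (ρ : Matrix (ZMod d) (ZMod d) ℂ) :
    GP ((Dmat d α β)ᴴ * ρ * Dmat d α β) = GP ρ := by
  set N := shiftPhase α (fun n => ZMod.stdAddChar (-2⁻¹ * α * β - β * n))
  have hmomentum : (Fmat d)ᴴ * ((Dmat d α β)ᴴ * ρ * Dmat d α β) * Fmat d =
      Nᴴ * ((Fmat d)ᴴ * ρ * Fmat d) * N := by
    calc (Fmat d)ᴴ * ((Dmat d α β)ᴴ * ρ * Dmat d α β) * Fmat d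
        = (Dmat d α β * Fmat d)ᴴ * ρ * (Dmat d α β * Fmat d) := by
          simp only [conjTranspose_mul, Matrix.mul_assoc]
      _ = Nᴴ * ((Fmat d)ᴴ * ρ * Fmat d) * N := by
          simp only [Dmat_mul_Fmat, N, conjTranspose_mul, Matrix.mul_assoc]
  rw [GP, GP, PP_eq_PX, PP_eq_PX, hmomentum,
    PX_conjTranspose_shiftPhase_mul_mul (fun _ => star_stdAddChar_mul_self _), gini_comp_add_right]

end Displacement

theorem GXP_displacement_invariant_general {d : ℕ} [NeZero d]
    (ρ : Matrix (ZMod d) (ZMod d) ℂ) (hρ : IsDensityMatrix ρ) (α β : ZMod d) :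
    IsDensityMatrix ((Dmat d α β)ᴴ * ρ * Dmat d α β) ∧
    GX ((Dmat d α β)ᴴ * ρ * Dmat d α β) = GX ρ ∧
    GP ((Dmat d α β)ᴴ * ρ * Dmat d α β) = GP ρ ∧
    GXP ((Dmat d α β)ᴴ * ρ * Dmat d α β) = GXP ρ := by
  have hGX := GX_conjTranspose_Dmat_mul_mul α β ρ
  have hGP := GP_conjTranspose_Dmat_mul_mul α β ρ
  exact ⟨hρ.conjTranspose_mul_mul (Dmat_conjTranspose_mul_self α β), hGX, hGP,
    by rw [GXP, GXP, hGX, hGP]⟩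

/-- For every density matrix `ρ` and all `α, β ∈ ZMod d`, the displaced matrix
`D(α,β)ᴴ ρ D(α,β)` is a density matrix and satisfies `G_X(D(α,β)ᴴ ρ D(α,β)) = G_X(ρ)` and
`G_P(D(α,β)ᴴ ρ D(α,β)) = G_P(ρ)`; in particular `G_XP(D(α,β)ᴴ ρ D(α,β)) = G_XP(ρ)`. -/
theorem GXP_displacement_invariant {d : ℕ} [NeZero d] (hd : 2 ≤ d) (hodd : Odd d)
    (ρ : Matrix (ZMod d) (ZMod d) ℂ) (hρ : IsDensityMatrix ρ) (α β : ZMod d) :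
    IsDensityMatrix ((Dmat d α β)ᴴ * ρ * Dmat d α β) ∧
    GX ((Dmat d α β)ᴴ * ρ * Dmat d α β) = GX ρ ∧
    GP ((Dmat d α β)ᴴ * ρ * Dmat d α β) = GP ρ ∧
    GXP ((Dmat d α β)ᴴ * ρ * Dmat d α β) = GXP ρ :=
  GXP_displacement_invariant_general ρ hρ α β
end

section
/- A density matrix ρ satisfies G_X(ρ) = (d − 1)/(d + 1) if and only if there exists a ∈ ZMod d such that ρ is the projector onto the position state |X;a⟩, i.e. ρ r s = 1 if r = a and s = a, and ρ r s = 0 otherwise. -/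
open Matrix
open scoped ComplexOrder

/-!
With `q` the increasing rearrangement of a probability vector `p` on `d` points, exchanging the
order of summation gives `G(p) = (d-1)/(d+1) - 2/(d+1) · ∑ₖ (d-1-k) q k`. All weights are
nonnegative and only the weight of the largest entry vanishes, so the maximal value
`(d-1)/(d+1)` is attained exactly at point masses. For a positive semidefinite `ρ`, a vanishing
diagonal entry forces its whole row and column to vanish; hence `P_X(ρ)` is the point mass at `a`
iff `ρ = |X;a⟩⟨X;a|`.
-/

namespace Matrix.PosSemidef

variable {n 𝕜 : Type*} [Fintype n] [RCLike 𝕜] {A : Matrix n n 𝕜}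

lemma apply_eq_zero_of_diag_eq_zero_right (hA : A.PosSemidef) {j : n} (hj : A j j = 0)
    (i : n) : A i j = 0 := by
  classical
  -- `star eⱼ ⬝ᵥ A *ᵥ eⱼ = A j j`, and for `A ≥ 0` a null direction of the form is in the kernel.
  have h := (hA.dotProduct_mulVec_zero_iff (Pi.single j 1)).mp (by simpa using hj)
  simpa using congrFun h i

lemma apply_eq_zero_of_diag_eq_zero_left (hA : A.PosSemidef) {i : n} (hi : A i i = 0)
    (j : n) : A i j = 0 := by
  rw [← hA.isHermitian.apply i j, hA.apply_eq_zero_of_diag_eq_zero_right hi, star_zero]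

lemma eq_ite_of_diag_eq_ite [DecidableEq n] (hA : A.PosSemidef) {a : n}
    (hdiag : ∀ r, A r r = if r = a then 1 else 0) (r s : n) :
    A r s = if r = a ∧ s = a then 1 else 0 := by
  by_cases hr : r = a
  · by_cases hs : s = a
    · subst hr hs; simpa using hdiag s
    · simp [hs, hA.apply_eq_zero_of_diag_eq_zero_right (by simpa [hs] using hdiag s)]
  · simp [hr, hA.apply_eq_zero_of_diag_eq_zero_left (by simpa [hr] using hdiag r)]

end Matrix.PosSemidef

lemma sum_lorenzF {d : ℕ} (p : Fin d → ℝ) :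
    ∑ ℓ, lorenzF p ℓ = ∑ k : Fin d, ((d : ℝ) - k) * p (Tuple.sort p k) := by
  simp only [lorenzF]
  rw [Finset.sum_comm' (t' := Finset.univ) (s' := Finset.Ici) (by simp [and_comm])]
  refine Finset.sum_congr rfl fun k _ => ?_
  rw [Finset.sum_const, Fin.card_Ici, nsmul_eq_mul, Nat.cast_sub k.isLt.le]

lemma giniF_eq_sub_mul_sum {d : ℕ} {p : Fin d → ℝ} (hp : ∑ k, p k = 1) :
    giniF p = ((d : ℝ) - 1) / (d + 1)
      - 2 / (d + 1) * ∑ k : Fin d, ((d : ℝ) - 1 - k) * p (Tuple.sort p k) := by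
  have hsort : ∑ k, p (Tuple.sort p k) = 1 := (Equiv.sum_comp _ p).trans hp
  have hdeficit : ∑ k : Fin d, ((d : ℝ) - 1 - k) * p (Tuple.sort p k)
      = ∑ ℓ, lorenzF p ℓ - ∑ k, p (Tuple.sort p k) := by
    rw [sum_lorenzF, ← Finset.sum_sub_distrib]
    exact Finset.sum_congr rfl fun k _ => by ring
  rw [giniF, hdeficit, hsort]
  field_simp
  ring

lemma sum_sub_val_mul_eq_zero_iff {n : ℕ} {q : Fin (n + 1) → ℝ} (hq : ∀ k, 0 ≤ q k) :
    ∑ k : Fin (n + 1), ((n : ℝ) - k) * q k = 0 ↔ ∀ k ≠ Fin.last n, q k = 0 := by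
  have hw : ∀ k : Fin (n + 1), 0 ≤ (n : ℝ) - k :=
    fun k => sub_nonneg.2 (by exact_mod_cast Fin.is_le k)
  rw [Finset.sum_eq_zero_iff_of_nonneg fun k _ => mul_nonneg (hw k) (hq k)]
  constructor
  · intro h k hk
    have : (k : ℝ) < n := by exact_mod_cast Fin.val_lt_last hk
    exact (mul_eq_zero.1 (h k (Finset.mem_univ k))).resolve_left (by linarith)
  · intro h k _
    by_cases hk : k = Fin.last n
    · simp [hk]
    · simp [h k hk]

lemma forall_ne_last_sort_eq_zero_iff {n : ℕ} {p : Fin (n + 1) → ℝ} (hp : ∑ k, p k = 1) :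
    (∀ k ≠ Fin.last n, p (Tuple.sort p k) = 0) ↔ ∃ a, ∀ j, p j = if j = a then 1 else 0 := by
  set σ := Tuple.sort p
  constructor
  · intro h
    have hzero : ∀ j ≠ σ (Fin.last n), p j = 0 := fun j hj => by
      simpa using h (σ.symm j) fun hl => hj (σ.symm_apply_eq.1 hl)
    refine ⟨σ (Fin.last n), fun j => ?_⟩
    split_ifs with hj
    · rw [hj, ← hp, Finset.sum_eq_single _ (fun j _ => hzero j) (by simp)]
    · exact hzero j hj
  · rintro ⟨a, ha⟩ k hk
    have hmax : σ (Fin.last n) = a := by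
      by_contra hne
      have := Tuple.monotone_sort p (Fin.le_last (σ.symm a))
      norm_num [σ, ha, hne] at this
    rw [ha, if_neg fun hka => hk (σ.injective (hka.trans hmax.symm))]

lemma giniF_eq_max_iff {n : ℕ} {p : Fin (n + 1) → ℝ} (hp0 : ∀ k, 0 ≤ p k) (hp : ∑ k, p k = 1) :
    giniF p = (((n + 1 : ℕ) : ℝ) - 1) / ((n + 1 : ℕ) + 1) ↔
      ∃ a, ∀ j, p j = if j = a then 1 else 0 := by
  rw [giniF_eq_sub_mul_sum hp, ← forall_ne_last_sort_eq_zero_iff hp,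
    ← sum_sub_val_mul_eq_zero_iff fun k => hp0 _, sub_eq_self, mul_eq_zero]
  push_cast
  simp only [add_sub_cancel_right]
  exact or_iff_right (by positivity)

lemma gini_eq_max_iff {d : ℕ} [NeZero d] {p : ZMod d → ℝ} (hp0 : ∀ r, 0 ≤ p r)
    (hp : ∑ r, p r = 1) :
    gini p = ((d : ℝ) - 1) / (d + 1) ↔ ∃ a, ∀ r, p r = if r = a then 1 else 0 := by
  obtain ⟨n, rfl⟩ := Nat.exists_eq_succ_of_ne_zero (NeZero.ne d)
  have hcast : (fun k : Fin (n + 1) => p ((k : ℕ) : ZMod (n + 1))) = p :=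
    funext fun k => congrArg p (ZMod.natCast_zmod_val (n := n + 1) k)
  rw [gini, hcast]
  exact giniF_eq_max_iff hp0 hp

section DensityMatrix

variable {d : ℕ} [NeZero d] {ρ : Matrix (ZMod d) (ZMod d) ℂ}

lemma PX_nonneg (hρ : ρ.PosSemidef) (r : ZMod d) : 0 ≤ PX ρ r :=
  (Complex.nonneg_iff.1 hρ.diag_nonneg).1

lemma ofReal_PX (hρ : ρ.PosSemidef) (r : ZMod d) : (PX ρ r : ℂ) = ρ r r :=
  Complex.ext (by simp [PX]) (by simpa [PX] using (Complex.nonneg_iff.1 hρ.diag_nonneg).2)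

lemma sum_PX (hρ : IsDensityMatrix ρ) : ∑ r, PX ρ r = 1 := by
  simpa [PX, Matrix.trace, Complex.re_sum] using congrArg Complex.re hρ.2

lemma PX_eq_ite_iff (hρ : ρ.PosSemidef) (a : ZMod d) :
    (∀ r, PX ρ r = if r = a then 1 else 0) ↔
      ∀ r s, ρ r s = if r = a ∧ s = a then 1 else 0 := by
  constructor
  · intro h
    refine hρ.eq_ite_of_diag_eq_ite fun r => ?_
    rw [← ofReal_PX hρ, h r]
    split_ifs <;> simp
  · intro h r
    simp only [PX, h r r, and_self]
    split_ifs <;> simp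

end DensityMatrix

theorem GX_eq_max_iff_position_state_general {d : ℕ} [NeZero d]
    (ρ : Matrix (ZMod d) (ZMod d) ℂ) (hρ : IsDensityMatrix ρ) :
    GX ρ = ((d : ℝ) - 1) / ((d : ℝ) + 1) ↔
      ∃ a : ZMod d, ∀ r s : ZMod d, ρ r s = if r = a ∧ s = a then 1 else 0 := by
  rw [GX, gini_eq_max_iff (PX_nonneg hρ.1) (sum_PX hρ)]
  exact exists_congr fun a => PX_eq_ite_iff hρ.1 a

/-- A density matrix `ρ` satisfies `G_X(ρ) = (d − 1)/(d + 1)` if and only if there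
exists `a ∈ ZMod d` such that `ρ` is the projector onto the position state `|X;a⟩`, i.e.
`ρ r s = 1` if `r = a` and `s = a`, and `ρ r s = 0` otherwise. -/
theorem GX_eq_max_iff_position_state {d : ℕ} [NeZero d] (hd : 2 ≤ d)
    (ρ : Matrix (ZMod d) (ZMod d) ℂ) (hρ : IsDensityMatrix ρ) :
    GX ρ = ((d : ℝ) - 1) / ((d : ℝ) + 1) ↔
      ∃ a : ZMod d, ∀ r s : ZMod d, ρ r s = if r = a ∧ s = a then 1 else 0 :=
  GX_eq_max_iff_position_state_general ρ hρ
end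

section
/- For any probability vector λ on ZMod d, let ρ be the diagonal matrix with diagonal entries λ r (a mixture of position projectors). Then ρ is a density matrix, G_P(ρ) = 0, and G_XP(ρ) ≤ (d − 1)/(d + 1). -/
open Matrix
open scoped ComplexOrder

/-!
The momentum distribution of a state diagonal in the position basis is uniform, since every
entry of the Fourier matrix has modulus `1/√d`; a uniform distribution has Gini index `0`.
For any probability vector the last Lorenz value is `1` and the others are nonnegative, so the
Lorenz values sum to at least `1`, which gives `G ≤ 1 − 2/(d+1) = (d−1)/(d+1)`.
-/

section Gini

lemma lorenzF_nonneg {d : ℕ} {p : Fin d → ℝ} (hp : ∀ k, 0 ≤ p k) (ℓ : Fin d) :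
    0 ≤ lorenzF p ℓ :=
  Finset.sum_nonneg fun _ _ => hp _

lemma lorenzF_last {n : ℕ} (p : Fin (n + 1) → ℝ) : lorenzF p (Fin.last n) = ∑ k, p k := by
  rw [lorenzF, ← Fin.top_eq_last, Finset.Iic_top, Equiv.sum_comp]

lemma sum_le_sum_lorenzF {d : ℕ} {p : Fin d → ℝ} (hp : ∀ k, 0 ≤ p k) :
    ∑ k, p k ≤ ∑ ℓ, lorenzF p ℓ := by
  cases d with
  | zero => simp
  | succ n =>
    rw [← lorenzF_last]
    exact Finset.single_le_sum (fun ℓ _ => lorenzF_nonneg hp ℓ) (Finset.mem_univ _)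

lemma giniF_le {d : ℕ} {p : Fin d → ℝ} (hp : ∀ k, 0 ≤ p k) (hsum : ∑ k, p k = 1) :
    giniF p ≤ ((d : ℝ) - 1) / ((d : ℝ) + 1) := by
  have hlorenz : 1 ≤ ∑ ℓ, lorenzF p ℓ := hsum ▸ sum_le_sum_lorenzF hp
  have hd : (0 : ℝ) < d + 1 := by positivity
  calc giniF p ≤ 1 - 2 / ((d : ℝ) + 1) * 1 := by
        rw [giniF]; gcongr
    _ = ((d : ℝ) - 1) / ((d : ℝ) + 1) := by field_simp; ring

lemma lorenzF_const {d : ℕ} (c : ℝ) (ℓ : Fin d) :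
    lorenzF (fun _ => c) ℓ = ((ℓ : ℝ) + 1) * c := by
  rw [lorenzF, Finset.sum_const, Fin.card_Iic, nsmul_eq_mul]
  push_cast; ring

lemma giniF_const (d : ℕ) (c : ℝ) : giniF (fun _ : Fin d => c) = 1 - d * c := by
  have gauss : ∀ n : ℕ, ∑ k ∈ Finset.range n, ((k : ℝ) + 1) = n * (n + 1) / 2 := by
    intro n
    induction n with
    | zero => simp
    | succ m ih => rw [Finset.sum_range_succ, ih]; push_cast; ring
  have hd : (0 : ℝ) < d + 1 := by positivity
  simp only [giniF, lorenzF_const, ← Finset.sum_mul,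
    Fin.sum_univ_eq_sum_range (fun k => (k : ℝ) + 1), gauss]
  field_simp

lemma sum_fin_natCast_zmod {d : ℕ} [NeZero d] (f : ZMod d → ℝ) :
    ∑ k : Fin d, f ((k : ℕ) : ZMod d) = ∑ r, f r := by
  apply Fintype.sum_bijective (fun k : Fin d => ((k : ℕ) : ZMod d))
  · rw [Fintype.bijective_iff_surjective_and_card]
    exact ⟨fun r => ⟨⟨r.val, r.val_lt⟩, ZMod.natCast_zmod_val r⟩, by simp [ZMod.card]⟩
  · exact fun _ => rfl

lemma gini_le {d : ℕ} [NeZero d] {p : ZMod d → ℝ} (hp : ∀ r, 0 ≤ p r)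
    (hsum : ∑ r, p r = 1) : gini p ≤ ((d : ℝ) - 1) / ((d : ℝ) + 1) :=
  giniF_le (fun _ => hp _) ((sum_fin_natCast_zmod p).trans hsum)

lemma gini_const {d : ℕ} [NeZero d] (c : ℝ) : gini (fun _ : ZMod d => c) = 1 - d * c :=
  giniF_const d c

end Gini

section Fourier

lemma norm_omega (d : ℕ) : ‖omega d‖ = 1 := by
  rw [omega, show 2 * (Real.pi : ℂ) * Complex.I / d = ((2 * Real.pi / d : ℝ) : ℂ) * Complex.I by
    push_cast; ring]
  exact Complex.norm_exp_ofReal_mul_I _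

lemma normSq_Fmat {d : ℕ} [NeZero d] (r s : ZMod d) : Complex.normSq (Fmat d r s) = 1 / d := by
  rw [← Complex.sq_norm, Fmat, of_apply, norm_div, norm_pow, norm_omega, one_pow,
    Complex.norm_real, Real.norm_of_nonneg (Real.sqrt_nonneg _), div_pow, Real.sq_sqrt (Nat.cast_nonneg d),
    one_pow]

lemma conjTranspose_mul_diagonal_mul_apply {n : Type*} [Fintype n] [DecidableEq n]
    (A : Matrix n n ℂ) (v : n → ℂ) (r : n) :
    (Aᴴ * diagonal v * A) r r = ∑ t, (Complex.normSq (A t r) : ℂ) * v t := by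
  rw [mul_apply]
  simp only [mul_diagonal, conjTranspose_apply, Complex.normSq_eq_conj_mul_self]
  exact Finset.sum_congr rfl fun _ _ => by rw [Complex.star_def]; ring

end Fourier

section DiagonalStates

variable {d : ℕ} [NeZero d] (lam : ZMod d → ℝ)

lemma PX_diagonal_ofReal : PX (diagonal fun r => (lam r : ℂ)) = lam := by
  funext r
  rw [PX, diagonal_apply_eq, Complex.ofReal_re]

lemma PP_diagonal_ofReal :
    PP (diagonal fun r => (lam r : ℂ)) = fun _ => (∑ r, lam r) / d := by
  funext r
  rw [PP, conjTranspose_mul_diagonal_mul_apply]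
  simp only [normSq_Fmat, ← Complex.ofReal_mul, ← Complex.ofReal_sum, Complex.ofReal_re,
    ← Finset.mul_sum]
  ring

lemma isDensityMatrix_diagonal_ofReal (hlam : ∀ r, 0 ≤ lam r) (hsum : ∑ r, lam r = 1) :
    IsDensityMatrix (diagonal fun r => (lam r : ℂ)) := by
  refine ⟨posSemidef_diagonal_iff.mpr fun r => Complex.zero_le_real.mpr (hlam r), ?_⟩
  rw [trace_diagonal, ← Complex.ofReal_sum, hsum, Complex.ofReal_one]

end DiagonalStates

theorem GXP_mixture_of_position_states_general {d : ℕ} [NeZero d]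
    (lam : ZMod d → ℝ) (hlam_nonneg : ∀ r, 0 ≤ lam r) (hlam_sum : ∑ r, lam r = 1) :
    IsDensityMatrix (Matrix.diagonal fun r => (lam r : ℂ)) ∧
    GP (Matrix.diagonal fun r => (lam r : ℂ)) = 0 ∧
    GXP (Matrix.diagonal fun r => (lam r : ℂ)) ≤ ((d : ℝ) - 1) / ((d : ℝ) + 1) := by
  have hd : (d : ℝ) ≠ 0 := Nat.cast_ne_zero.mpr (NeZero.ne d)
  have hGP : GP (diagonal fun r => (lam r : ℂ)) = 0 := by
    rw [GP, PP_diagonal_ofReal, hlam_sum, gini_const, mul_one_div_cancel hd, sub_self]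
  refine ⟨isDensityMatrix_diagonal_ofReal lam hlam_nonneg hlam_sum, hGP, ?_⟩
  rw [GXP, hGP, add_zero, GX, PX_diagonal_ofReal]
  exact gini_le hlam_nonneg hlam_sum

/-- For any probability vector `λ` on `ZMod d`, let `ρ` be the diagonal matrix
with diagonal entries `λ r` (a mixture of position projectors). Then `ρ` is a density matrix,
`G_P(ρ) = 0`, and `G_XP(ρ) ≤ (d − 1)/(d + 1)`. -/
theorem GXP_mixture_of_position_states {d : ℕ} [NeZero d] (hd : 2 ≤ d)
    (lam : ZMod d → ℝ) (hlam_nonneg : ∀ r, 0 ≤ lam r) (hlam_sum : ∑ r, lam r = 1) :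
    IsDensityMatrix (Matrix.diagonal fun r => (lam r : ℂ)) ∧
    GP (Matrix.diagonal fun r => (lam r : ℂ)) = 0 ∧
    GXP (Matrix.diagonal fun r => (lam r : ℂ)) ≤ ((d : ℝ) - 1) / ((d : ℝ) + 1) :=
  GXP_mixture_of_position_states_general lam hlam_nonneg hlam_sum
end
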